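/- Let R be a commutative Noetherian ring and *R its ultrapower. An ideal q of R is p-primary if and only if the extension q·*R is p·*R-primary in *R. -/

import Mathlib

open Filter

/-- The diagonal embedding of `R` into its ultrapower `*R = (ι → R)/U`. -/
noncomputable def diag {ι : Type*} (U : Ultrafilter ι) (R : Type*) [CommRing R] :
    R →+* Filter.Germ (U : Filter ι) R :=
  (Filter.Germ.coeRingHom (U : Filter ι)).comp (Pi.constRingHom ι R)

/-!
Write `q^U` for the ideal of germs lying `U`-almost everywhere in `q`. Since `q` is finitely
generated, a germ in `q^U` is a combination of the generators with germ coefficients, so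
`q·*R = q^U`; since `(√q)^N ⊆ q` for some `N`, also `√(q^U) = (√q)^U`. For an ultrafilter, a
product lying almost everywhere in `q` has a factor lying almost everywhere in `q` or in `√q`,
which transfers primariness from `q` to `q·*R`. Conversely `q^U` contracts to `q` along the
diagonal, and contractions of primary ideals are primary.
-/

namespace Filter.Germ

variable {ι R : Type*} [CommRing R] (l : Filter ι)

def constRingHom : R →+* l.Germ R := (coeRingHom l).comp (Pi.constRingHom ι R)

end Filter.Germ

namespace Ideal

open Filter.Germ

variable {ι R : Type*} [CommRing R] (l : Filter ι) {q : Ideal R}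

def germ (q : Ideal R) : Ideal (l.Germ R) where
  carrier := {x | x.LiftPred (· ∈ q)}
  add_mem' {x y} hx hy := by
    induction x using Filter.Germ.inductionOn
    induction y using Filter.Germ.inductionOn
    exact (hx.and hy).mono fun _ h => q.add_mem h.1 h.2
  zero_mem' := Eventually.of_forall fun _ => q.zero_mem
  smul_mem' c x hx := by
    induction c using Filter.Germ.inductionOn
    induction x using Filter.Germ.inductionOn
    exact hx.mono fun _ h => q.mul_mem_left _ h

variable {l}

theorem coe_mem_germ {f : ι → R} : (f : l.Germ R) ∈ q.germ l ↔ ∀ᶠ i in l, f i ∈ q :=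
  liftPred_coe

theorem const_mem_germ [l.NeBot] {r : R} : (r : l.Germ R) ∈ q.germ l ↔ r ∈ q :=
  liftPred_const_iff

theorem comap_constRingHom_germ [l.NeBot] (q : Ideal R) :
    (q.germ l).comap (constRingHom l) = q :=
  ext fun _ => const_mem_germ

theorem map_constRingHom_le_germ (q : Ideal R) :
    q.map (constRingHom l) ≤ q.germ l :=
  map_le_iff_le_comap.2 fun _ hr => Eventually.of_forall fun _ => hr

theorem germ_le_map_constRingHom (hq : q.FG) :
    q.germ l ≤ q.map (constRingHom l) := by
  obtain ⟨n, v, rfl⟩ := Submodule.fg_iff_exists_fin_generating_family.1 hq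
  intro x hx
  induction x using Filter.Germ.inductionOn with | h f =>
  have hc : ∀ i, ∃ c : Fin n → R, f i ∈ span (Set.range v) → ∑ j, c j * v j = f i := by
    intro i
    by_cases hi : f i ∈ span (Set.range v)
    · obtain ⟨c, hc⟩ := mem_span_range_iff_exists_fun.1 hi
      exact ⟨c, fun _ => hc⟩
    · exact ⟨0, fun h => absurd h hi⟩
  choose c hc using hc
  have hf : (f : l.Germ R) = ∑ j, (fun i => c i j : l.Germ R) * constRingHom l (v j) := by
    have hsum : ∑ j, (fun i => c i j : l.Germ R) * constRingHom l (v j) =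
        ((fun i => ∑ j, c i j * v j : ι → R) : l.Germ R) := by
      calc _ = ∑ j, coeRingHom l ((fun i => c i j) * fun _ => v j) := rfl
        _ = _ := by rw [← map_sum]; exact congrArg (coeRingHom l) (by ext i; simp)
    rw [hsum, coe_eq]
    filter_upwards [coe_mem_germ.1 hx] with i hi using (hc i hi).symm
  rw [hf]
  exact Ideal.sum_mem _ fun j _ =>
    mul_mem_left _ _ (mem_map_of_mem _ (subset_span (Set.mem_range_self j)))

theorem map_constRingHom_eq_germ (hq : q.FG) : q.map (constRingHom l) = q.germ l :=
  le_antisymm (map_constRingHom_le_germ q) (germ_le_map_constRingHom hq)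

theorem germ_ne_top [l.NeBot] (hq : q ≠ ⊤) : q.germ l ≠ ⊤ := fun h =>
  hq (by rw [← comap_constRingHom_germ (l := l) q, h, comap_top])

theorem radical_germ_le : (q.germ l).radical ≤ q.radical.germ l := by
  rintro x ⟨n, hn⟩
  induction x using Filter.Germ.inductionOn
  exact (coe_mem_germ.1 hn).mono fun _ hi => ⟨n, hi⟩

theorem germ_radical (h : q.radical.FG) : q.radical.germ l = (q.germ l).radical := by
  refine le_antisymm (fun x hx => ?_) radical_germ_le
  obtain ⟨N, hN⟩ := q.exists_radical_pow_le_of_fg h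
  induction x using Filter.Germ.inductionOn
  exact ⟨N, (coe_mem_germ.1 hx).mono fun _ hi => hN (pow_mem_pow hi N)⟩

theorem IsPrimary.germ (hq : q.IsPrimary) (h : q.radical.FG) (U : Ultrafilter ι) :
    (q.germ (U : Filter ι)).IsPrimary := by
  rw [isPrimary_iff] at hq ⊢
  refine ⟨germ_ne_top hq.1, fun {x y} hxy => ?_⟩
  induction x using Filter.Germ.inductionOn
  induction y using Filter.Germ.inductionOn
  rw [← germ_radical h, coe_mem_germ, coe_mem_germ, ← Ultrafilter.eventually_or]
  exact (coe_mem_germ.1 hxy).mono fun _ hi => hq.2 hi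

end Ideal

theorem ultrapower_primary_iff_general {ι R : Type*} [CommRing R] [IsNoetherianRing R]
    (U : Ultrafilter ι) (p q : Ideal R) :
    (q.IsPrimary ∧ q.radical = p) ↔
      ((q.map (diag U R)).IsPrimary ∧
        (q.map (diag U R)).radical = p.map (diag U R)) := by
  have fg (I : Ideal R) : I.FG := IsNoetherian.noetherian I
  have map_eq (I : Ideal R) : I.map (diag U R) = I.germ (U : Filter ι) :=
    Ideal.map_constRingHom_eq_germ (fg I)
  have comap_eq (I : Ideal R) : (I.germ (U : Filter ι)).comap (diag U R) = I :=
    Ideal.comap_constRingHom_germ I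
  rw [map_eq, map_eq, ← Ideal.germ_radical (fg _)]
  constructor
  · rintro ⟨hq, rfl⟩
    exact ⟨hq.germ (fg _) U, rfl⟩
  · rintro ⟨hq, hrad⟩
    exact ⟨comap_eq q ▸ hq.comap _, by rw [← comap_eq q.radical, hrad, comap_eq]⟩

/-- For a commutative Noetherian ring `R` with ultrapower `*R`, a prime `p` and an ideal
`q` of `R`: `q` is `p`-primary iff the extension `q·*R` is `p·*R`-primary. -/
theorem ultrapower_primary_iff {ι R : Type*} [CommRing R] [IsNoetherianRing R]
    (U : Ultrafilter ι) (p q : Ideal R) (hp : p.IsPrime) :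
    (q.IsPrimary ∧ q.radical = p) ↔
      ((q.map (diag U R)).IsPrimary ∧
        (q.map (diag U R)).radical = p.map (diag U R)) :=
  ultrapower_primary_iff_general U p q
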